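/- arXiv:2307.10167 — 3 statements merged into one kernel-verified Lean document; each statement's English description precedes it below -/
import Mathlib

section
/- Let $(B_k)_{k \geq 0}$ be a sequence of invertible $d \times d$ matrices defined recursively by $B_{k+1} = (\mathrm{I} - h M_k) B_k + h (B_k^{-1})^{\top}$ for step size $h > 0$ and symmetric matrices $M_k$, and let $(\Sigma_k)_{k \geq 0}$ be defined by $\Sigma_{k+1} = (\mathrm{I} - h(M_k - \Sigma_k^{-1})) \Sigma_k (\mathrm{I} - h(M_k - \Sigma_k^{-1}))$ with $\Sigma_0 = B_0 B_0^{\top}$. Then for all $k$, $B_k B_k^{\top} = \Sigma_k$. -/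
/-!
Since `(B Bᵀ)⁻¹ B = (B⁻¹)ᵀ`, the square-root step rewrites as `B' = A B` with
`A = I - h (M - (B Bᵀ)⁻¹)` symmetric, so `B' B'ᵀ = A (B Bᵀ) A`: the square-root recursion is the
covariance recursion pulled back through `Σ = B Bᵀ`, and the claim follows by induction on `k`.
-/

open Matrix

section

variable {n R : Type*} [Fintype n] [CommRing R]

theorem Matrix.mul_mul_transpose_of_isSymm {A : Matrix n n R} (hA : A.IsSymm) (B : Matrix n n R) :
    A * B * (A * B)ᵀ = A * (B * Bᵀ) * A := by
  rw [transpose_mul, hA.eq, Matrix.mul_assoc, Matrix.mul_assoc, Matrix.mul_assoc]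

variable [DecidableEq n]

theorem Matrix.inv_mul_transpose_mul_self {B : Matrix n n R} (hB : IsUnit B) :
    (B * Bᵀ)⁻¹ * B = (B⁻¹)ᵀ := by
  rw [mul_inv_rev, Matrix.mul_assoc, nonsing_inv_mul _ ((isUnit_iff_isUnit_det B).mp hB),
    Matrix.mul_one, transpose_nonsing_inv]

theorem Matrix.IsSymm.one_sub_smul_sub_inv {M S : Matrix n n R} (hM : M.IsSymm) (hS : S.IsSymm)
    (h : R) : (1 - h • (M - S⁻¹)).IsSymm :=
  isSymm_one.sub ((hM.sub hS.inv).smul h)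

theorem Matrix.one_sub_smul_mul_add_smul_inv_transpose {B : Matrix n n R} (hB : IsUnit B)
    (M : Matrix n n R) (h : R) :
    (1 - h • M) * B + h • (B⁻¹)ᵀ = (1 - h • (M - (B * Bᵀ)⁻¹)) * B := by
  rw [smul_sub, ← sub_add, add_mul, Matrix.smul_mul, inv_mul_transpose_mul_self hB]

end

theorem sqrt_recursion_tracks_covariance_general {d : ℕ} (h : ℝ)
    (M : ℕ → Matrix (Fin d) (Fin d) ℝ) (hM : ∀ k, (M k).IsSymm)
    (B S : ℕ → Matrix (Fin d) (Fin d) ℝ)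
    (hBinv : ∀ k, IsUnit (B k))
    (hB : ∀ k, B (k+1) = ((1 : Matrix (Fin d) (Fin d) ℝ) - h • M k) * B k + h • ((B k)⁻¹)ᵀ)
    (hS : ∀ k, S (k+1)
      = ((1 : Matrix (Fin d) (Fin d) ℝ) - h • (M k - (S k)⁻¹)) * S k
        * ((1 : Matrix (Fin d) (Fin d) ℝ) - h • (M k - (S k)⁻¹)))
    (hS0 : S 0 = B 0 * (B 0)ᵀ) :
    ∀ k, B k * (B k)ᵀ = S k := by
  intro k
  induction k with
  | zero => exact hS0.symm
  | succ k ih =>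
    have hA : (1 - h • (M k - (B k * (B k)ᵀ)⁻¹)).IsSymm :=
      (hM k).one_sub_smul_sub_inv (isSymm_mul_transpose_self (B k)) h
    rw [hB k, one_sub_smul_mul_add_smul_inv_transpose (hBinv k), mul_mul_transpose_of_isSymm hA,
      hS k, ih]

/-- The square-root recursion tracks the covariance recursion: `B k * (B k)ᵀ = Σ k`. -/
theorem sqrt_recursion_tracks_covariance {d : ℕ} (h : ℝ) (hh : 0 < h)
    (M : ℕ → Matrix (Fin d) (Fin d) ℝ) (hM : ∀ k, (M k).IsSymm)
    (B S : ℕ → Matrix (Fin d) (Fin d) ℝ)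
    (hBinv : ∀ k, IsUnit (B k))
    (hSpos : ∀ k, (S k).PosDef)
    (hB : ∀ k, B (k+1) = ((1 : Matrix (Fin d) (Fin d) ℝ) - h • M k) * B k + h • ((B k)⁻¹)ᵀ)
    (hS : ∀ k, S (k+1)
      = ((1 : Matrix (Fin d) (Fin d) ℝ) - h • (M k - (S k)⁻¹)) * S k
        * ((1 : Matrix (Fin d) (Fin d) ℝ) - h • (M k - (S k)⁻¹)))
    (hS0 : S 0 = B 0 * (B 0)ᵀ) :
    ∀ k, B k * (B k)ᵀ = S k :=
  sqrt_recursion_tracks_covariance_general h M hM B S hBinv hB hS hS0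
end

section
/- (Covariance lower bound preservation, single step.) Let $V$ be a symmetric positive definite $d \times d$ matrix, $\eta > 0$, and let the step size satisfy $h \leq \frac{\lambda_{\min}(V)}{2\eta(\lambda_{\min}(V)^2 + 2\lambda_{\max}(V)^2)}$. Set $A = \mathrm{I} - \eta h V$. If $\Sigma$ is symmetric positive definite with $\Sigma \succeq V^{-1}/(2\eta)$, then $\Sigma' = A \Sigma A + 2h A + h^2 \Sigma^{-1}$ also satisfies $\Sigma' \succeq V^{-1}/(2\eta)$. -/
/-!
With `W = V⁻¹ / (2η)` and `A = 1 - ηhV`, one has `A W A = W - h + (ηh²/2) V`, so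

  `A Σ A + 2hA + h² Σ⁻¹ - W = A (Σ - W) A + h (1 - (3/2) ηh V) + h² Σ⁻¹`.

The first and last terms are positive semidefinite because `Σ ⪰ W` and `Σ ≻ 0`; the middle one is
because the step size condition gives `(3/2) ηh λ_max(V) ≤ 1`.
-/

open Matrix

lemma three_halves_mul_le_one_of_le_div {a b η h : ℝ} (hη : 0 < η) (hh : 0 < h)
    (hstep : h ≤ a / (2 * η * (a ^ 2 + 2 * b ^ 2))) : 3 / 2 * η * h * b ≤ 1 := by
  rcases le_or_gt b 0 with hb | hb
  · nlinarith [mul_pos hη hh]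
  have hD : 0 < 2 * η * (a ^ 2 + 2 * b ^ 2) := by positivity
  have hstep' : h * (2 * η * (a ^ 2 + 2 * b ^ 2)) ≤ a := (le_div_iff₀ hD).mp hstep
  -- the claim reduces to `3ab ≤ 4a² + 8b²`
  nlinarith [sq_nonneg (a - b), mul_le_mul_of_nonneg_right hstep' hb.le, mul_pos hη hh]

section Spectral

variable {n : Type*} [Fintype n] [DecidableEq n]

open scoped ComplexOrder in
lemma Matrix.IsHermitian.posSemidef_smul_one_sub_of_eigenvalues_le {𝕜 : Type*} [RCLike 𝕜]
    {A : Matrix n n 𝕜} (hA : A.IsHermitian) {μ : ℝ} (hμ : ∀ i, hA.eigenvalues i ≤ μ) :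
    ((μ : 𝕜) • 1 - A).PosSemidef := by
  refine posSemidef_iff_isHermitian_and_spectrum_nonneg.mpr
    ⟨(isHermitian_one.smul (RCLike.conj_ofReal μ)).sub hA, ?_⟩
  rw [← Algebra.algebraMap_eq_smul_one, ← spectrum.singleton_sub_eq, hA.spectrum_eq_image_range]
  rintro _ ⟨_, rfl, _, ⟨_, ⟨i, rfl⟩, rfl⟩, rfl⟩
  change 0 ≤ (μ : 𝕜) - (hA.eigenvalues i : 𝕜)
  rw [← RCLike.ofReal_sub, RCLike.ofReal_nonneg]
  exact sub_nonneg.mpr (hμ i)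

lemma Matrix.IsHermitian.posSemidef_one_sub_smul_of_eigenvalues_le {A : Matrix n n ℝ}
    (hA : A.IsHermitian) {μ c : ℝ} (hμ : ∀ i, hA.eigenvalues i ≤ μ) (hc : 0 ≤ c)
    (hcμ : c * μ ≤ 1) : (1 - c • A).PosSemidef := by
  have hsplit : 1 - c • A = c • (μ • 1 - A) + (1 - c * μ) • (1 : Matrix n n ℝ) := by module
  rw [hsplit]
  exact ((hA.posSemidef_smul_one_sub_of_eigenvalues_le hμ).smul hc).add
    (PosSemidef.one.smul (sub_nonneg.mpr hcμ))

end Spectral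

section StepIdentity

variable {n K : Type*} [Fintype n] [DecidableEq n] [Field K] [CharZero K]

lemma one_sub_smul_mul_smul_inv_mul_one_sub_smul {V : Matrix n n K} (hV : IsUnit V.det)
    {η : K} (hη : η ≠ 0) (h : K) :
    (1 - (η * h) • V) * ((2 * η)⁻¹ • V⁻¹) * (1 - (η * h) • V)
      = (2 * η)⁻¹ • V⁻¹ - h • 1 + (η * h ^ 2 / 2) • V := by
  simp only [sub_mul, mul_sub, one_mul, mul_one, smul_mul_assoc, mul_smul_comm, smul_smul,
    mul_nonsing_inv V hV, nonsing_inv_mul V hV]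
  match_scalars <;> field_simp; ring

lemma one_sub_smul_conj_add_sub_smul_inv_eq {V : Matrix n n K} (hV : IsUnit V.det) {η : K}
    (hη : η ≠ 0) (h : K) (S : Matrix n n K) :
    (1 - (η * h) • V) * S * (1 - (η * h) • V) + (2 * h) • (1 - (η * h) • V) - (2 * η)⁻¹ • V⁻¹
      = (1 - (η * h) • V) * (S - (2 * η)⁻¹ • V⁻¹) * (1 - (η * h) • V)
        + h • (1 - (3 / 2 * η * h) • V) := by
  rw [mul_sub (1 - (η * h) • V), sub_mul _ _ (1 - (η * h) • V),
    one_sub_smul_mul_smul_inv_mul_one_sub_smul hV hη]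
  module

end StepIdentity

theorem covariance_lower_bound_preserved_general {d : ℕ} [DecidableEq (Fin d)]
    (V : Matrix (Fin d) (Fin d) ℝ) (hV : V.PosDef) (hH : V.IsHermitian)
    (lmin lmax : ℝ)
    (hlmax : IsGreatest (Set.range hH.eigenvalues) lmax)
    (η h : ℝ) (hη : 0 < η)
    (hstep : 0 < h ∧ h ≤ lmin / (2 * η * (lmin^2 + 2 * lmax^2)))
    (Sig : Matrix (Fin d) (Fin d) ℝ) (hSig : Sig.PosDef)
    (hlow : (Sig - (2 * η)⁻¹ • V⁻¹).PosSemidef) :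
    let A : Matrix (Fin d) (Fin d) ℝ := 1 - (η * h) • V
    ((A * Sig * A + (2 * h) • A + (h^2) • Sig⁻¹) - (2 * η)⁻¹ • V⁻¹).PosSemidef := by
  intro A
  obtain ⟨hh, hstep⟩ := hstep
  have hAH : Aᴴ = A := (isHermitian_one.sub (hH.smul (IsSelfAdjoint.all _))).eq
  have hcong : (A * (Sig - (2 * η)⁻¹ • V⁻¹) * A).PosSemidef := by
    simpa only [hAH] using hlow.mul_mul_conjTranspose_same A
  have hmid : (1 - (3 / 2 * η * h) • V).PosSemidef :=
    hH.posSemidef_one_sub_smul_of_eigenvalues_le (fun i => hlmax.2 ⟨i, rfl⟩) (by positivity)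
      (three_halves_mul_le_one_of_le_div hη hh hstep)
  rw [add_sub_right_comm,
    one_sub_smul_conj_add_sub_smul_inv_eq hV.det_pos.ne'.isUnit hη.ne' h Sig]
  exact (hcong.add (hmid.smul hh.le)).add (hSig.posSemidef.inv.smul (sq_nonneg h))

/-- Covariance lower bound preservation, single step. -/
theorem covariance_lower_bound_preserved {d : ℕ} [DecidableEq (Fin d)]
    (V : Matrix (Fin d) (Fin d) ℝ) (hV : V.PosDef) (hH : V.IsHermitian)
    (lmin lmax : ℝ)
    (hlmin : IsLeast (Set.range hH.eigenvalues) lmin)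
    (hlmax : IsGreatest (Set.range hH.eigenvalues) lmax)
    (η h : ℝ) (hη : 0 < η)
    (hstep : 0 < h ∧ h ≤ lmin / (2 * η * (lmin^2 + 2 * lmax^2)))
    (Sig : Matrix (Fin d) (Fin d) ℝ) (hSig : Sig.PosDef)
    (hlow : (Sig - (2 * η)⁻¹ • V⁻¹).PosSemidef) :
    let A : Matrix (Fin d) (Fin d) ℝ := 1 - (η * h) • V
    ((A * Sig * A + (2 * h) • A + (h^2) • Sig⁻¹) - (2 * η)⁻¹ • V⁻¹).PosSemidef :=
  covariance_lower_bound_preserved_general V hV hH lmin lmax hlmax η h hη hstep Sig hSig hlow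
end

section
/- (One-step contraction of the covariance error.) Let $V$ be symmetric positive definite, $\eta > 0$, $h \leq \frac{\lambda_{\min}(V)}{2\eta(\lambda_{\min}(V)^2 + 2\lambda_{\max}(V)^2)}$, and $A = \mathrm{I} - \eta h V$. Let $\Sigma$ be symmetric positive definite with $\Sigma \succeq V^{-1}/(2\eta)$, set $\Lambda = \Sigma - V^{-1}/\eta$ and $\Lambda' = A \Lambda A - \eta h^2 V \Lambda \Sigma^{-1}$. Then $\|\Lambda'\|_2 \leq (1 - \tfrac{3\eta h}{2}\lambda_{\min}(V)) \|\Lambda\|_2$. -/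
/-!
Submultiplicativity gives `‖Λ'‖ ≤ (‖A‖² + η h² ‖V‖ ‖Σ⁻¹‖) ‖Λ‖`. The spectrum of `V` lies in
`[λ_min, λ_max]`, so the functional calculus gives `‖A‖ ≤ 1 - η h λ_min` and `‖V‖ ≤ λ_max`, while
`Σ ⪰ V⁻¹ / (2η) ⪰ (2η λ_max)⁻¹` gives `‖Σ⁻¹‖ ≤ 2η λ_max`. The step-size condition is exactly what
makes `(1 - η h λ_min)² + 2 η² h² λ_max² ≤ 1 - (3/2) η h λ_min`.
-/

open Matrix
open scoped Matrix.Norms.L2Operator MatrixOrder Ring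

section SelfAdjoint

variable {A : Type*} [NormedRing A] [StarRing A] [NormedAlgebra ℝ A]
  [IsometricContinuousFunctionalCalculus ℝ A IsSelfAdjoint]

lemma IsSelfAdjoint.norm_le_of_spectrum_subset_Icc {a : A} (ha : IsSelfAdjoint a) {m M : ℝ}
    (hspec : spectrum ℝ a ⊆ Set.Icc m M) (hmM : m ≤ M) (hm : 0 ≤ m) : ‖a‖ ≤ M := by
  rw [← cfc_id ℝ a]
  refine norm_cfc_le (hm.trans hmM) fun x hx => ?_
  rw [id, Real.norm_of_nonneg (hm.trans (hspec hx).1)]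
  exact (hspec hx).2

lemma IsSelfAdjoint.norm_one_sub_smul_le {a : A} (ha : IsSelfAdjoint a) {m M t : ℝ}
    (hspec : spectrum ℝ a ⊆ Set.Icc m M) (hmM : m ≤ M) (ht : 0 ≤ t) (htM : t * M ≤ 1) :
    ‖1 - t • a‖ ≤ 1 - t * m := by
  rw [← cfc_const_mul_id t a, ← cfc_const_one ℝ a, ← cfc_sub ..]
  refine norm_cfc_le (by nlinarith) fun x hx => ?_
  obtain ⟨hmx, hxM⟩ := hspec hx
  rw [Real.norm_eq_abs, abs_le]
  constructor <;> nlinarith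

variable [PartialOrder A] [StarOrderedRing A]

lemma IsSelfAdjoint.algebraMap_inv_le_ringInverse {a : A} (ha : IsSelfAdjoint a) {M : ℝ}
    (hspec : spectrum ℝ a ⊆ Set.Ioc 0 M) : algebraMap ℝ A M⁻¹ ≤ a⁻¹ʳ := by
  have hunit : IsUnit a := spectrum.isUnit_of_zero_notMem ℝ fun h0 => (hspec h0).1.false
  rw [← cfc_ringInverse_id (R := ℝ) a hunit ha]
  exact algebraMap_le_cfc _ _ _ (fun x hx => inv_anti₀ (hspec hx).1 (hspec hx).2)
    (continuousOn_inv₀.mono fun x hx => (hspec hx).1.ne')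

variable [StarModule ℝ A] [NonnegSpectrumClass ℝ A]

lemma norm_ringInverse_le_of_algebraMap_le {a : A} {r : ℝ} (hr : 0 < r)
    (h : algebraMap ℝ A r ≤ a) : ‖a⁻¹ʳ‖ ≤ r⁻¹ := by
  have ha : IsSelfAdjoint a := by
    simpa using (IsSelfAdjoint.of_nonneg (sub_nonneg.2 h)).add (IsSelfAdjoint.algebraMap A (.all r))
  have hspec : ∀ x ∈ spectrum ℝ a, r ≤ x := (algebraMap_le_iff_le_spectrum ha).1 h
  have hunit : IsUnit a := spectrum.isUnit_of_zero_notMem ℝ fun h0 => (hspec 0 h0).not_gt hr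
  rw [← cfc_ringInverse_id (R := ℝ) a hunit ha]
  refine norm_cfc_le (inv_nonneg.2 hr.le) fun x hx => ?_
  rw [norm_inv, Real.norm_of_nonneg (hr.le.trans (hspec x hx))]
  exact inv_anti₀ hr (hspec x hx)

lemma IsSelfAdjoint.norm_ringInverse_le_of_smul_ringInverse_le {v s : A} (hv : IsSelfAdjoint v)
    {c M : ℝ} (hc : 0 < c) (hM : 0 < M) (hspec : spectrum ℝ v ⊆ Set.Ioc 0 M)
    (h : c • v⁻¹ʳ ≤ s) : ‖s⁻¹ʳ‖ ≤ M / c := by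
  have hs : algebraMap ℝ A (c * M⁻¹) ≤ s := calc
    algebraMap ℝ A (c * M⁻¹) = c • algebraMap ℝ A M⁻¹ := by
      rw [Algebra.algebraMap_eq_smul_one, Algebra.algebraMap_eq_smul_one, smul_smul]
    _ ≤ c • v⁻¹ʳ := by
      gcongr
      exact hv.algebraMap_inv_le_ringInverse hspec
    _ ≤ s := h
  simpa [div_eq_mul_inv] using norm_ringInverse_le_of_algebraMap_le (by positivity) hs

end SelfAdjoint

lemma norm_mul_mul_sub_smul_le {R : Type*} [NormedRing R] [NormedAlgebra ℝ R]
    {a l v s : R} {α β γ t : ℝ} (ha : ‖a‖ ≤ α) (hv : ‖v‖ ≤ β) (hs : ‖s‖ ≤ γ) (ht : 0 ≤ t) :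
    ‖a * l * a - t • (v * l * s)‖ ≤ (α ^ 2 + t * β * γ) * ‖l‖ := calc
  ‖a * l * a - t • (v * l * s)‖ ≤ ‖a‖ * ‖l‖ * ‖a‖ + t * (‖v‖ * ‖l‖ * ‖s‖) := by
    refine (norm_sub_le _ _).trans (add_le_add (norm_mul₃_le ..) ?_)
    rw [norm_smul, Real.norm_of_nonneg ht]
    gcongr
    exact norm_mul₃_le ..
  _ ≤ α * ‖l‖ * α + t * (β * ‖l‖ * γ) := by
    have hα : 0 ≤ α := (norm_nonneg _).trans ha
    have hβ : 0 ≤ β := (norm_nonneg _).trans hv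
    gcongr
  _ = (α ^ 2 + t * β * γ) * ‖l‖ := by ring

lemma one_sub_mul_sq_add_le {x m M : ℝ} (hx : 0 ≤ x) (h : x * (m ^ 2 + 2 * M ^ 2) ≤ m / 2) :
    (1 - x * m) ^ 2 + 2 * x ^ 2 * M ^ 2 ≤ 1 - 3 / 2 * x * m := by
  nlinarith

theorem covariance_error_contraction_general {d : ℕ} [DecidableEq (Fin d)]
    (V : Matrix (Fin d) (Fin d) ℝ) (hV : V.PosDef) (hH : V.IsHermitian)
    (lmin lmax : ℝ)
    (hlmin : IsLeast (Set.range hH.eigenvalues) lmin)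
    (hlmax : IsGreatest (Set.range hH.eigenvalues) lmax)
    (η h : ℝ) (hη : 0 < η)
    (hstep : 0 < h ∧ h ≤ lmin / (2 * η * (lmin^2 + 2 * lmax^2)))
    (Sig : Matrix (Fin d) (Fin d) ℝ)
    (hlow : (Sig - (2 * η)⁻¹ • V⁻¹).PosSemidef) :
    let A : Matrix (Fin d) (Fin d) ℝ := 1 - (η * h) • V
    let Lam : Matrix (Fin d) (Fin d) ℝ := Sig - η⁻¹ • V⁻¹
    ‖A * Lam * A - (η * h^2) • (V * Lam * Sig⁻¹)‖ ≤ (1 - 3 * η * h / 2 * lmin) * ‖Lam‖ := by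
  intro A Lam
  obtain ⟨hh, hstep⟩ := hstep
  have hspec : spectrum ℝ V ⊆ Set.Icc lmin lmax := by
    rw [hH.spectrum_real_eq_range_eigenvalues]
    exact fun x hx => ⟨hlmin.2 hx, hlmax.2 hx⟩
  have hlmin_pos : 0 < lmin := by
    obtain ⟨i, rfl⟩ := hlmin.1
    exact hV.eigenvalues_pos i
  have hlmin_le : lmin ≤ lmax := hlmax.2 hlmin.1
  have hlmax_pos : 0 < lmax := hlmin_pos.trans_le hlmin_le
  have hx : η * h * (lmin ^ 2 + 2 * lmax ^ 2) ≤ lmin / 2 := by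
    rw [le_div_iff₀ (by positivity)] at hstep
    linarith
  have hA : ‖A‖ ≤ 1 - η * h * lmin :=
    hH.isSelfAdjoint.norm_one_sub_smul_le hspec hlmin_le (by positivity) (by nlinarith)
  have hV_norm : ‖V‖ ≤ lmax :=
    hH.isSelfAdjoint.norm_le_of_spectrum_subset_Icc hspec hlmin_le hlmin_pos.le
  have hSig_inv : ‖Sig⁻¹‖ ≤ lmax / (2 * η)⁻¹ := by
    rw [nonsing_inv_eq_ringInverse]
    refine hH.isSelfAdjoint.norm_ringInverse_le_of_smul_ringInverse_le (by positivity) hlmax_pos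
      (hspec.trans (Set.Icc_subset_Ioc hlmin_pos le_rfl)) ?_
    rwa [← nonsing_inv_eq_ringInverse, Matrix.le_iff]
  calc ‖A * Lam * A - (η * h ^ 2) • (V * Lam * Sig⁻¹)‖
      ≤ ((1 - η * h * lmin) ^ 2 + η * h ^ 2 * lmax * (lmax / (2 * η)⁻¹)) * ‖Lam‖ :=
        norm_mul_mul_sub_smul_le hA hV_norm hSig_inv (by positivity)
    _ ≤ (1 - 3 * η * h / 2 * lmin) * ‖Lam‖ := by
        rw [div_inv_eq_mul]
        gcongr
        linear_combination one_sub_mul_sq_add_le (by positivity) hx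

/-- One-step contraction of the covariance error. -/
theorem covariance_error_contraction {d : ℕ} [DecidableEq (Fin d)]
    (V : Matrix (Fin d) (Fin d) ℝ) (hV : V.PosDef) (hH : V.IsHermitian)
    (lmin lmax : ℝ)
    (hlmin : IsLeast (Set.range hH.eigenvalues) lmin)
    (hlmax : IsGreatest (Set.range hH.eigenvalues) lmax)
    (η h : ℝ) (hη : 0 < η)
    (hstep : 0 < h ∧ h ≤ lmin / (2 * η * (lmin^2 + 2 * lmax^2)))
    (Sig : Matrix (Fin d) (Fin d) ℝ) (hSig : Sig.PosDef)
    (hlow : (Sig - (2 * η)⁻¹ • V⁻¹).PosSemidef) :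
    let A : Matrix (Fin d) (Fin d) ℝ := 1 - (η * h) • V
    let Lam : Matrix (Fin d) (Fin d) ℝ := Sig - η⁻¹ • V⁻¹
    ‖A * Lam * A - (η * h^2) • (V * Lam * Sig⁻¹)‖ ≤ (1 - 3 * η * h / 2 * lmin) * ‖Lam‖ :=
  covariance_error_contraction_general V hV hH lmin lmax hlmin hlmax η h hη hstep Sig hlow
end
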